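/- arXiv:2605.03869 — 2 statements merged into one kernel-verified Lean document; each statement's English description precedes it below -/
import Mathlib

section
/- Let f : ℝ^d → ℝ be a differentiable function with gradient g = ∇f(x) at a point x ∈ ℝ^d, let q ≥ 1, and let u_1, …, u_q be i.i.d. standard Gaussian vectors in ℝ^d (u_i ~ N(0, I_d)). Then for every coordinate k ∈ {1, …, d}, the expectation over u_1, …, u_q of the squared k-th coordinate of the averaged projected-gradient estimator (1/q) Σ_{i=1}^q ⟨g, u_i⟩ u_i equals (1/q)(‖g‖² + g_k²) + g_k². In vector form, E_u[((1/q) Σ_{i=1}^q ⟨∇f(x), u_i⟩ u_i)²] = (1/q)(‖∇f(x)‖² 1_d + ∇f(x)²) + ∇f(x)², where (·)² denotes the element-wise square. -/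
open MeasureTheory ProbabilityTheory Metric
open scoped RealInnerProductSpace ENNReal

noncomputable section

/-- The standard Gaussian measure `N(0, I_d)` on `ℝ^d`, realized as the pushforward of the
product of `d` standard real Gaussians along the canonical measurable equivalence. -/
def stdGaussian (d : ℕ) : Measure (EuclideanSpace ℝ (Fin d)) :=
  (Measure.pi fun _ : Fin d => gaussianReal 0 1).map (MeasurableEquiv.toLp 2 (Fin d → ℝ))

instance (d : ℕ) : IsProbabilityMeasure (stdGaussian d) :=
  Measure.isProbabilityMeasure_map (MeasurableEquiv.measurable _).aemeasurable

/-! With `Y u = ⟪g, u⟫ * u k`, the `k`-th coordinate of the estimator is the sample mean of `q`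
i.i.d. copies of `Y`, so its second moment is `Var Y / q + (𝔼 Y)²`. Expanding `⟪g, u⟫` in
coordinates, `𝔼 Y = ∑ⱼ gⱼ 𝔼[uⱼ uₖ] = g k` and `𝔼 Y² = ∑ⱼ,ₗ gⱼ gₗ 𝔼[uⱼ uₗ uₖ²] = ‖g‖² + 2 (g k)²`,
the factor `3` of the diagonal term being the fourth moment of a standard Gaussian;
hence `Var Y = ‖g‖² + (g k)²`. -/

open Real
open scoped NNReal

section Monomials

variable {ι : Type*} [Fintype ι] [DecidableEq ι]

lemma mul_eq_prod_pow_single (v : ι → ℝ) (j k : ι) :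
    v j * v k = ∏ i, v i ^ (Pi.single j 1 + Pi.single k 1 : ι → ℕ) i := by
  simp only [Pi.add_apply, pow_add, Finset.prod_mul_distrib, Pi.single_apply, pow_ite, pow_zero,
    Finset.prod_ite_eq', Finset.mem_univ, if_true, pow_one]

lemma mul_mul_sq_eq_prod_pow_single (v : ι → ℝ) (j l k : ι) :
    v j * v l * v k ^ 2
      = ∏ i, v i ^ (Pi.single j 1 + Pi.single l 1 + Pi.single k 2 : ι → ℕ) i := by
  simp only [Pi.add_apply, pow_add, Finset.prod_mul_distrib, Pi.single_apply, pow_ite, pow_zero,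
    Finset.prod_ite_eq', Finset.mem_univ, if_true, pow_one]

end Monomials

namespace MeasureTheory

variable {ι : Type*} [Fintype ι]

lemma integral_prod_pow_pi (μ : Measure ℝ) [SigmaFinite μ] (e : ι → ℕ) :
    ∫ v : ι → ℝ, ∏ i, v i ^ e i ∂Measure.pi (fun _ ↦ μ) = ∏ i, ∫ x, x ^ e i ∂μ :=
  integral_fintype_prod_eq_prod fun i x ↦ x ^ e i

lemma integrable_prod_pow_pi {μ : Measure ℝ} [SigmaFinite μ]
    (hμ : ∀ n : ℕ, Integrable (fun x ↦ x ^ n) μ) (e : ι → ℕ) :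
    Integrable (fun v : ι → ℝ ↦ ∏ i, v i ^ e i) (Measure.pi fun _ ↦ μ) :=
  Integrable.fintype_prod fun i ↦ hμ (e i)

end MeasureTheory

namespace ProbabilityTheory

lemma integrable_pow_gaussianReal (μ : ℝ) (v : ℝ≥0) (n : ℕ) :
    Integrable (fun x ↦ x ^ n) (gaussianReal μ v) :=
  integrable_pow_of_mem_interior_integrableExpSet
    (by simp [integrableExpSet_fun_id_gaussianReal]) n

lemma integral_pow_gaussianReal_of_odd (v : ℝ≥0) {n : ℕ} (hn : Odd n) :
    ∫ x, x ^ n ∂gaussianReal 0 v = 0 := by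
  have h := integral_map (μ := gaussianReal 0 v) (φ := fun x : ℝ ↦ -x) (f := fun x ↦ x ^ n)
    (by fun_prop) (by fun_prop)
  simp only [gaussianReal_map_neg, neg_zero, hn.neg_pow, integral_neg] at h
  linarith

lemma integral_pow_gaussianReal_of_even {v : ℝ≥0} (hv : v ≠ 0) {n : ℕ} (hn : Even n) :
    ∫ x, x ^ n ∂gaussianReal 0 v
      = (2 * v) ^ (((n : ℝ) + 1) / 2) * Gamma (((n : ℝ) + 1) / 2) / √(2 * π * v) := by
  have hGamma := integral_rpow_mul_exp_neg_mul_rpow (p := 2) (q := n) (b := (2 * (v : ℝ))⁻¹)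
    two_pos (neg_one_lt_zero.trans_le n.cast_nonneg) (by positivity)
  have hpdf (x : ℝ) : gaussianPDFReal 0 v x * x ^ n
      = (√(2 * π * v))⁻¹ * (|x| ^ (n : ℝ) * exp (-(2 * (v : ℝ))⁻¹ * |x| ^ (2 : ℝ))) := by
    simp only [gaussianPDFReal, sub_zero, rpow_natCast, hn.pow_abs, rpow_two, sq_abs]
    ring_nf
  rw [integral_gaussianReal_eq_integral_smul hv]
  simp_rw [smul_eq_mul, hpdf]
  rw [integral_const_mul,
    integral_comp_abs (f := fun x ↦ x ^ (n : ℝ) * exp (-(2 * (v : ℝ))⁻¹ * x ^ (2 : ℝ))), hGamma,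
    inv_rpow (by positivity), neg_div, rpow_neg (by positivity), inv_inv]
  ring

lemma integral_pow_add_two_gaussianReal (v : ℝ≥0) {n : ℕ} (hn : Even n) :
    ∫ x, x ^ (n + 2) ∂gaussianReal 0 v = (n + 1) * v * ∫ x, x ^ n ∂gaussianReal 0 v := by
  rcases eq_or_ne v 0 with rfl | hv
  · simp
  rw [integral_pow_gaussianReal_of_even hv hn,
    integral_pow_gaussianReal_of_even hv (hn.add even_two)]
  have hs : ((↑(n + 2) : ℝ) + 1) / 2 = ((n : ℝ) + 1) / 2 + 1 := by push_cast; ring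
  rw [hs, rpow_add_one (by positivity), Gamma_add_one (by positivity)]
  ring

lemma integral_sq_gaussianReal_zero_one : ∫ x, x ^ 2 ∂gaussianReal 0 1 = 1 := by
  simpa using integral_pow_add_two_gaussianReal 1 Even.zero

lemma integral_pow_four_gaussianReal_zero_one : ∫ x, x ^ 4 ∂gaussianReal 0 1 = 3 := by
  rw [integral_pow_add_two_gaussianReal 1 even_two, integral_sq_gaussianReal_zero_one]
  norm_num

section Coordinates

variable {ι : Type*} [Fintype ι] [DecidableEq ι]

lemma integral_mul_pi_gaussianReal (j k : ι) :
    ∫ v : ι → ℝ, v j * v k ∂Measure.pi (fun _ ↦ gaussianReal 0 1) = if j = k then 1 else 0 := by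
  simp_rw [mul_eq_prod_pow_single, integral_prod_pow_pi]
  rcases eq_or_ne j k with rfl | hjk
  · rw [← Pi.single_add, Fintype.prod_eq_single j fun i hi ↦ by simp [hi]]
    simp [integral_sq_gaussianReal_zero_one]
  · rw [if_neg hjk]
    apply Finset.prod_eq_zero (Finset.mem_univ j)
    simp [hjk]

lemma integral_mul_mul_sq_pi_gaussianReal (j l k : ι) :
    ∫ v : ι → ℝ, v j * v l * v k ^ 2 ∂Measure.pi (fun _ ↦ gaussianReal 0 1)
      = if j = l then (if j = k then 3 else 1) else 0 := by
  simp_rw [mul_mul_sq_eq_prod_pow_single, integral_prod_pow_pi]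
  rcases eq_or_ne j l with rfl | hjl
  · rw [← Pi.single_add, if_pos rfl]
    rcases eq_or_ne j k with rfl | hjk
    · rw [← Pi.single_add, Fintype.prod_eq_single j fun i hi ↦ by simp [hi]]
      simp [integral_pow_four_gaussianReal_zero_one]
    · rw [Fintype.prod_eq_mul j k hjk fun i hi ↦ by simp [hi]]
      simp [hjk, hjk.symm, integral_sq_gaussianReal_zero_one]
  · rw [if_neg hjl]
    apply Finset.prod_eq_zero (Finset.mem_univ j)
    rcases eq_or_ne j k with rfl | hjk
    · simpa [hjl] using integral_pow_gaussianReal_of_odd 1 (n := 3) (by decide)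
    · simp [hjl, hjk]

lemma integrable_mul_pi_gaussianReal (j k : ι) :
    Integrable (fun v : ι → ℝ ↦ v j * v k) (Measure.pi fun _ ↦ gaussianReal 0 1) :=
  (integrable_prod_pow_pi (integrable_pow_gaussianReal 0 1) _).congr
    (ae_of_all _ fun v ↦ (mul_eq_prod_pow_single v j k).symm)

lemma integrable_mul_mul_sq_pi_gaussianReal (j l k : ι) :
    Integrable (fun v : ι → ℝ ↦ v j * v l * v k ^ 2) (Measure.pi fun _ ↦ gaussianReal 0 1) :=
  (integrable_prod_pow_pi (integrable_pow_gaussianReal 0 1) _).congr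
    (ae_of_all _ fun v ↦ (mul_mul_sq_eq_prod_pow_single v j l k).symm)

end Coordinates

section SampleMean

variable {Ω ι : Type*} [MeasurableSpace Ω] {μ : Measure Ω} [IsProbabilityMeasure μ] [Fintype ι]

lemma variance_sum_comp_eval_pi {Y : Ω → ℝ} (hY : MemLp Y 2 μ) :
    Var[fun U : ι → Ω ↦ ∑ i, Y (U i); Measure.pi fun _ ↦ μ] = Fintype.card ι * Var[Y; μ] := by
  have h := variance_sum_pi (μ := fun _ : ι ↦ μ) (X := fun _ ↦ Y) fun _ ↦ hY
  simp only [Finset.sum_const, Finset.card_univ, nsmul_eq_mul] at h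
  rw [← h]
  congr 1
  ext U
  simp

lemma integral_sum_comp_eval_pi {Y : Ω → ℝ} (hY : Integrable Y μ) :
    ∫ U : ι → Ω, ∑ i, Y (U i) ∂Measure.pi (fun _ ↦ μ) = Fintype.card ι * μ[Y] := by
  rw [integral_finsetSum _ fun i _ ↦ ?_]
  · simp [integral_comp_eval (μ := fun _ ↦ μ) hY.aestronglyMeasurable]
  · exact integrable_comp_eval hY

lemma integral_sq_sampleMean_pi [Nonempty ι] {Y : Ω → ℝ} (hY : MemLp Y 2 μ) :
    ∫ U : ι → Ω, ((Fintype.card ι : ℝ)⁻¹ * ∑ i, Y (U i)) ^ 2 ∂Measure.pi (fun _ ↦ μ)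
      = (Fintype.card ι : ℝ)⁻¹ * Var[Y; μ] + μ[Y] ^ 2 := by
  have hn : (Fintype.card ι : ℝ) ≠ 0 := by positivity
  have hsum : MemLp (fun U : ι → Ω ↦ ∑ i, Y (U i)) 2 (Measure.pi fun _ ↦ μ) :=
    memLp_finsetSum _ fun i _ ↦ hY.comp_measurePreserving (measurePreserving_eval _ i)
  have h := variance_eq_sub (hsum.const_mul (Fintype.card ι : ℝ)⁻¹)
  rw [variance_const_mul, variance_sum_comp_eval_pi hY, integral_const_mul,
    integral_sum_comp_eval_pi (hY.integrable one_le_two)] at h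
  simp only [Pi.pow_apply, inv_mul_cancel_left₀ hn] at h
  have hscale : (Fintype.card ι : ℝ)⁻¹ ^ 2 * (Fintype.card ι * Var[Y; μ])
      = (Fintype.card ι : ℝ)⁻¹ * Var[Y; μ] := by
    field_simp
  linarith

end SampleMean

end ProbabilityTheory

-- Kept outside `ProbabilityTheory`, where `stdGaussian` would mean Mathlib's own measure.
section StdGaussian

variable {d : ℕ}

lemma integral_stdGaussian (h : EuclideanSpace ℝ (Fin d) → ℝ) :
    ∫ u, h u ∂stdGaussian d
      = ∫ v, h (WithLp.toLp 2 v) ∂Measure.pi fun _ : Fin d ↦ gaussianReal 0 1 :=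
  integral_map_equiv _ h

lemma integrable_stdGaussian_iff {h : EuclideanSpace ℝ (Fin d) → ℝ} :
    Integrable h (stdGaussian d)
      ↔ Integrable (fun v ↦ h (WithLp.toLp 2 v)) (Measure.pi fun _ : Fin d ↦ gaussianReal 0 1) :=
  integrable_map_equiv _ h

lemma inner_toLp_mul_eq_sum (g : EuclideanSpace ℝ (Fin d)) (v : Fin d → ℝ) (k : Fin d) :
    ⟪g, WithLp.toLp 2 v⟫ * v k = ∑ j, g j * (v j * v k) := by
  simp only [PiLp.inner_apply, RCLike.inner_apply, conj_trivial, Finset.sum_mul]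
  exact Finset.sum_congr rfl fun j _ ↦ by ring

lemma inner_toLp_mul_sq_eq_sum (g : EuclideanSpace ℝ (Fin d)) (v : Fin d → ℝ) (k : Fin d) :
    (⟪g, WithLp.toLp 2 v⟫ * v k) ^ 2 = ∑ j, ∑ l, g j * g l * (v j * v l * v k ^ 2) := by
  rw [inner_toLp_mul_eq_sum, sq, Finset.sum_mul_sum]
  exact Finset.sum_congr rfl fun j _ ↦ Finset.sum_congr rfl fun l _ ↦ by ring

lemma integral_inner_mul_apply_stdGaussian (g : EuclideanSpace ℝ (Fin d)) (k : Fin d) :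
    ∫ u, ⟪g, u⟫ * u k ∂stdGaussian d = g k := by
  rw [integral_stdGaussian]
  simp_rw [inner_toLp_mul_eq_sum]
  rw [integral_finsetSum _ fun j _ ↦ (integrable_mul_pi_gaussianReal j k).const_mul (g j)]
  simp [integral_const_mul, integral_mul_pi_gaussianReal]

lemma integrable_inner_mul_apply_sq_stdGaussian (g : EuclideanSpace ℝ (Fin d)) (k : Fin d) :
    Integrable (fun u ↦ (⟪g, u⟫ * u k) ^ 2) (stdGaussian d) := by
  rw [integrable_stdGaussian_iff]
  simp_rw [inner_toLp_mul_sq_eq_sum]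
  exact integrable_finsetSum _ fun j _ ↦ integrable_finsetSum _ fun l _ ↦
    (integrable_mul_mul_sq_pi_gaussianReal j l k).const_mul _

lemma memLp_inner_mul_apply_stdGaussian (g : EuclideanSpace ℝ (Fin d)) (k : Fin d) :
    MemLp (fun u ↦ ⟪g, u⟫ * u k) 2 (stdGaussian d) :=
  (memLp_two_iff_integrable_sq (by fun_prop)).2 (integrable_inner_mul_apply_sq_stdGaussian g k)

lemma integral_inner_mul_apply_sq_stdGaussian (g : EuclideanSpace ℝ (Fin d)) (k : Fin d) :
    ∫ u, (⟪g, u⟫ * u k) ^ 2 ∂stdGaussian d = ‖g‖ ^ 2 + 2 * g k ^ 2 := by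
  rw [integral_stdGaussian]
  simp_rw [inner_toLp_mul_sq_eq_sum]
  rw [integral_finsetSum _ fun j _ ↦ integrable_finsetSum _ fun l _ ↦
    (integrable_mul_mul_sq_pi_gaussianReal j l k).const_mul _]
  simp_rw [integral_finsetSum _ fun l _ ↦ (integrable_mul_mul_sq_pi_gaussianReal _ l k).const_mul _,
    integral_const_mul, integral_mul_mul_sq_pi_gaussianReal]
  have hsplit (j : Fin d) : (∑ l, g j * g l * if j = l then (if j = k then 3 else 1) else 0)
      = g j ^ 2 + if j = k then 2 * g k ^ 2 else 0 := by
    split_ifs with hjk <;> simp [hjk] <;> ring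
  simp_rw [hsplit, Finset.sum_add_distrib, Finset.sum_ite_eq', Finset.mem_univ, if_true,
    EuclideanSpace.norm_sq_eq, Real.norm_eq_abs, sq_abs]

lemma variance_inner_mul_apply_stdGaussian (g : EuclideanSpace ℝ (Fin d)) (k : Fin d) :
    Var[fun u ↦ ⟪g, u⟫ * u k; stdGaussian d] = ‖g‖ ^ 2 + g k ^ 2 := by
  rw [variance_eq_sub (memLp_inner_mul_apply_stdGaussian g k)]
  simp only [Pi.pow_apply, integral_inner_mul_apply_sq_stdGaussian,
    integral_inner_mul_apply_stdGaussian]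
  ring

lemma smul_sum_inner_smul_apply {ι : Type*} [Fintype ι] (c : ℝ) (g : EuclideanSpace ℝ (Fin d))
    (u : ι → EuclideanSpace ℝ (Fin d)) (k : Fin d) :
    (c • ∑ i, ⟪g, u i⟫ • u i) k = c * ∑ i, ⟪g, u i⟫ * u i k := by
  simp [Finset.sum_apply]

end StdGaussian

theorem gaussian_zo_estimator_sq_expectation_general
    {d q : ℕ} (hq : 1 ≤ q)
    (g : EuclideanSpace ℝ (Fin d)) (k : Fin d) :
    ∫ U : Fin q → EuclideanSpace ℝ (Fin d),
        ((((q : ℝ))⁻¹ • ∑ i : Fin q, ⟪g, U i⟫ • U i) k) ^ 2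
        ∂(Measure.pi fun _ : Fin q => stdGaussian d)
      = (1 / (q : ℝ)) * (‖g‖ ^ 2 + g k ^ 2) + g k ^ 2 := by
  have : Nonempty (Fin q) := ⟨⟨0, hq⟩⟩
  simp_rw [smul_sum_inner_smul_apply]
  have hmean := integral_sq_sampleMean_pi (ι := Fin q) (memLp_inner_mul_apply_stdGaussian g k)
  rw [Fintype.card_fin] at hmean
  rw [hmean, variance_inner_mul_apply_stdGaussian, integral_inner_mul_apply_stdGaussian, one_div]

/-- For a differentiable `f : ℝ^d → ℝ` with gradient `g = ∇f(x)` at `x`,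
`q ≥ 1`, and `u_1, …, u_q` i.i.d. standard Gaussian vectors, the expectation of the squared
`k`-th coordinate of `(1/q) ∑_i ⟨g, u_i⟩ u_i` equals `(1/q)(‖g‖² + g_k²) + g_k²`. -/
theorem gaussian_zo_estimator_sq_expectation
    {d q : ℕ} (hq : 1 ≤ q)
    (f : EuclideanSpace ℝ (Fin d) → ℝ) (x g : EuclideanSpace ℝ (Fin d))
    (hf : Differentiable ℝ f) (hg : gradient f x = g) (k : Fin d) :
    ∫ U : Fin q → EuclideanSpace ℝ (Fin d),
        ((((q : ℝ))⁻¹ • ∑ i : Fin q, ⟪g, U i⟫ • U i) k) ^ 2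
        ∂(Measure.pi fun _ : Fin q => stdGaussian d)
      = (1 / (q : ℝ)) * (‖g‖ ^ 2 + g k ^ 2) + g k ^ 2 :=
  gaussian_zo_estimator_sq_expectation_general hq g k
end
end

section
/- Let f : ℝ^d → ℝ be a differentiable function with gradient g = ∇f(x) at a point x ∈ ℝ^d, let q ≥ 1, and let u_1, …, u_q be i.i.d. vectors sampled uniformly from the unit sphere 𝕊 = {u ∈ ℝ^d : ‖u‖ = 1}. Then for every coordinate k ∈ {1, …, d}, the expectation over u_1, …, u_q of the squared k-th coordinate of the scaled averaged projected-gradient estimator (d/q) Σ_{i=1}^q ⟨g, u_i⟩ u_i equals d(‖g‖² + 2 g_k²)/(q(d+2)) + ((q−1)/q) g_k². In vector form, E_u[((d/q) Σ_{i=1}^q ⟨∇f(x), u_i⟩ u_i)²] = d(‖∇f(x)‖² 1_d + 2 ∇f(x)²)/(q(d+2)) + ((q−1)/q) ∇f(x)², where (·)² denotes the element-wise square. -/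
open MeasureTheory ProbabilityTheory Metric
open scoped RealInnerProductSpace ENNReal

noncomputable section

/-- The (unnormalized) surface measure of the unit sphere of `ℝ^d`, pushed forward to `ℝ^d`. -/
def sphereMeasure (d : ℕ) : Measure (EuclideanSpace ℝ (Fin d)) :=
  Measure.map Subtype.val ((volume : Measure (EuclideanSpace ℝ (Fin d))).toSphere)

def uniformSphere (d : ℕ) : Measure (EuclideanSpace ℝ (Fin d)) :=
  (sphereMeasure d Set.univ)⁻¹ • sphereMeasure d

instance (d : ℕ) [NeZero d] : IsProbabilityMeasure (uniformSphere d) := by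
  constructor
  have hmap : sphereMeasure d Set.univ
      = (volume : Measure (EuclideanSpace ℝ (Fin d))).toSphere Set.univ := by
    rw [sphereMeasure, Measure.map_apply measurable_subtype_coe MeasurableSet.univ]
    simp
  have h0 : sphereMeasure d Set.univ ≠ 0 := by
    rw [hmap, Measure.toSphere_apply_univ]
    refine mul_ne_zero ?_ ?_
    · simp [finrank_euclideanSpace_fin, NeZero.ne d]
    · exact (measure_ball_pos _ _ one_pos).ne'
  have htop : sphereMeasure d Set.univ ≠ ⊤ := by
    rw [hmap]
    exact (measure_lt_top _ _).ne
  rw [uniformSphere, Measure.smul_apply, smul_eq_mul, ENNReal.inv_mul_cancel h0 htop]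

/-!
The uniform measure on the sphere is the angular part of the Gaussian weight `exp (-‖x‖²)`.
Integrating a monomial `∏ xᵢ ^ aᵢ` against this weight factors in Cartesian coordinates into
one-dimensional Gaussian moments, and in polar coordinates into a sphere integral times a radial
Gamma integral. Comparing the two gives `E[u_j u_k] = δ_jk / d` and
`E[u_j u_l u_k²] = δ_jl (1 + 2 δ_jk) / (d (d + 2))`, hence for `X u = ⟨g, u⟩ u_k` the moments
`E X = g_k / d` and `E X² = (‖g‖² + 2 g_k²) / (d (d + 2))`. For i.i.d. samples,
`E (∑ᵢ X uᵢ)² = q E X² + q (q - 1) (E X)²`, and scaling by `(d / q)²` gives the formula.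
-/

namespace UniformSphere

open Set Real Finset

def radialGaussMoment (m : ℕ) : ℝ := ∫ r in Ioi (0 : ℝ), r ^ m * exp (-r ^ 2)

def gaussMoment (m : ℕ) : ℝ := ∫ x : ℝ, x ^ m * exp (-x ^ 2)

theorem radialGaussMoment_eq_Gamma (m : ℕ) :
    radialGaussMoment m = Gamma ((m + 1) / 2) / 2 := by
  have h := integral_rpow_mul_exp_neg_rpow (p := 2) (q := m) two_pos
    (by linarith [(Nat.cast_nonneg m : (0 : ℝ) ≤ m)])
  simp only [rpow_natCast, rpow_two] at h
  rw [radialGaussMoment, h]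
  ring

theorem radialGaussMoment_pos (m : ℕ) : 0 < radialGaussMoment m := by
  rw [radialGaussMoment_eq_Gamma]
  exact half_pos (Gamma_pos_of_pos (by positivity))

theorem radialGaussMoment_add_two (m : ℕ) :
    radialGaussMoment (m + 2) = (m + 1) / 2 * radialGaussMoment m := by
  simp only [radialGaussMoment_eq_Gamma, Nat.cast_add, Nat.cast_ofNat]
  rw [show ((m : ℝ) + 2 + 1) / 2 = (m + 1) / 2 + 1 by ring,
    Gamma_add_one (by positivity)]
  ring

theorem gaussMoment_of_odd {m : ℕ} (hm : Odd m) : gaussMoment m = 0 := by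
  have h := integral_neg_eq_self (fun x : ℝ => x ^ m * exp (-x ^ 2)) volume
  simp only [hm.neg_pow, neg_sq, neg_mul, integral_neg] at h
  exact self_eq_neg.mp h.symm

theorem gaussMoment_of_even {m : ℕ} (hm : Even m) : gaussMoment m = 2 * radialGaussMoment m := by
  rw [radialGaussMoment, ← integral_comp_abs (f := fun r => r ^ m * exp (-r ^ 2))]
  simp only [hm.pow_abs, sq_abs, gaussMoment]

theorem gaussMoment_add_two (m : ℕ) :
    gaussMoment (m + 2) = (m + 1) / 2 * gaussMoment m := by
  rcases m.even_or_odd with hm | hm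
  · rw [gaussMoment_of_even hm, gaussMoment_of_even (hm.add even_two),
      radialGaussMoment_add_two]
    ring
  · rw [gaussMoment_of_odd hm, gaussMoment_of_odd (hm.add_even even_two), mul_zero]

theorem gaussMoment_zero_pos : 0 < gaussMoment 0 := by
  rw [gaussMoment_of_even Even.zero]
  exact mul_pos two_pos (radialGaussMoment_pos 0)

theorem gaussMoment_two_div_gaussMoment_zero : gaussMoment 2 / gaussMoment 0 = 1 / 2 := by
  rw [gaussMoment_add_two 0]
  field_simp [gaussMoment_zero_pos.ne']
  norm_num

theorem gaussMoment_four_div_gaussMoment_zero : gaussMoment 4 / gaussMoment 0 = 3 / 4 := by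
  rw [gaussMoment_add_two 2, mul_div_assoc, gaussMoment_two_div_gaussMoment_zero]
  norm_num

section Polar

variable {E : Type*} [NormedAddCommGroup E] [NormedSpace ℝ E] [MeasurableSpace E] [BorelSpace E]
  [FiniteDimensional ℝ E] [Nontrivial E] (μ : Measure E) [μ.IsAddHaarMeasure]

theorem integral_mul_exp_neg_norm_sq_of_homogeneous (m : ℕ) {F : E → ℝ}
    (hF : ∀ r : ℝ, 0 < r → ∀ x, F (r • x) = r ^ m * F x) :
    ∫ x, F x * exp (-‖x‖ ^ 2) ∂μ
      = (∫ u, F u ∂μ.toSphere) * radialGaussMoment (Module.finrank ℝ E - 1 + m) := by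
  set n := Module.finrank ℝ E - 1
  calc ∫ x, F x * exp (-‖x‖ ^ 2) ∂μ
      = ∫ x : ({0}ᶜ : Set E), F x * exp (-‖(x : E)‖ ^ 2) ∂(μ.comap (↑)) := by
        rw [integral_subtype_comap (measurableSet_singleton _).compl
          (fun x => F x * exp (-‖x‖ ^ 2)), restrict_compl_singleton]
    _ = ∫ p : sphere (0 : E) 1 × Ioi (0 : ℝ), F p.1 * ((p.2 : ℝ) ^ m * exp (-(p.2 : ℝ) ^ 2))
          ∂(μ.toSphere.prod (.volumeIoiPow n)) := by
        rw [← μ.measurePreserving_homeomorphUnitSphereProd.integral_comp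
          (Homeomorph.measurableEmbedding _)]
        refine integral_congr_ae (.of_forall fun x => ?_)
        have hx : 0 < ‖(x : E)‖ := norm_pos_iff.2 x.2
        simp only [homeomorphUnitSphereProd_apply_fst_coe, homeomorphUnitSphereProd_apply_snd_coe]
        rw [← mul_assoc, ← mul_comm (‖(x : E)‖ ^ m), ← hF _ hx, smul_inv_smul₀ hx.ne']
    _ = (∫ u, F u ∂μ.toSphere)
          * ∫ r : Ioi (0 : ℝ), (r : ℝ) ^ m * exp (-(r : ℝ) ^ 2) ∂(.volumeIoiPow n) :=
        integral_prod_mul (fun u : sphere (0 : E) 1 => F u)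
          (fun r : Ioi (0 : ℝ) => (r : ℝ) ^ m * exp (-(r : ℝ) ^ 2))
    _ = (∫ u, F u ∂μ.toSphere) * radialGaussMoment (n + m) := by
        congr 1
        simp only [Measure.volumeIoiPow, ENNReal.ofReal]
        rw [integral_withDensity_eq_integral_smul
            ((measurable_subtype_coe.pow_const _).real_toNNReal),
          integral_subtype_comap measurableSet_Ioi
            (fun r : ℝ => (r ^ n).toNNReal • (r ^ m * exp (-r ^ 2)))]
        refine setIntegral_congr_fun measurableSet_Ioi fun r hr => ?_
        rw [NNReal.smul_def, Real.coe_toNNReal _ (pow_nonneg hr.out.le _), smul_eq_mul,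
          ← mul_assoc, ← pow_add]

end Polar

theorem integral_prod_pow_mul_exp_neg_norm_sq {ι : Type*} [Fintype ι] (a : ι → ℕ) :
    ∫ x : EuclideanSpace ℝ ι, (∏ i, x i ^ a i) * exp (-‖x‖ ^ 2) = ∏ i, gaussMoment (a i) := by
  have hsplit : ∀ x : EuclideanSpace ℝ ι,
      (∏ i, x i ^ a i) * exp (-‖x‖ ^ 2) = ∏ i, x i ^ a i * exp (-x i ^ 2) := by
    intro x
    rw [EuclideanSpace.real_norm_sq_eq, ← sum_neg_distrib, exp_sum, prod_mul_distrib]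
  simp_rw [hsplit]
  exact ((EuclideanSpace.volume_preserving_symm_measurableEquiv_toLp ι).integral_comp'
    (fun y : ι → ℝ => ∏ i, y i ^ a i * exp (-y i ^ 2))).trans
    (integral_fintype_prod_eq_prod (fun i (t : ℝ) => t ^ a i * exp (-t ^ 2)))

theorem real_inner_eq_sum_mul {ι : Type*} [Fintype ι] (g u : EuclideanSpace ℝ ι) :
    ⟪g, u⟫ = ∑ j, g j * u j := by
  simp only [PiLp.inner_apply, RCLike.inner_apply, conj_trivial, mul_comm]

section Monomials

variable {ι M : Type*} [Fintype ι] [DecidableEq ι] [CommMonoid M]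

theorem prod_pow_single (x : ι → M) (j : ι) (n : ℕ) :
    ∏ i, x i ^ (Pi.single j n : ι → ℕ) i = x j ^ n := by
  simp [Pi.single_apply, pow_ite]

theorem prod_apply_single {φ : ℕ → M} (hφ : φ 0 = 1) (j : ι) (n : ℕ) :
    ∏ i, φ ((Pi.single j n : ι → ℕ) i) = φ n := by
  rw [Fintype.prod_eq_single j fun i hi => by simp [hi, hφ], Pi.single_eq_same]

theorem prod_apply_single_add_single {φ : ℕ → M} (hφ : φ 0 = 1) {j k : ι} (hjk : j ≠ k)
    (m n : ℕ) : ∏ i, φ ((Pi.single j m + Pi.single k n : ι → ℕ) i) = φ m * φ n := by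
  rw [Finset.prod_eq_mul j k hjk (fun i _ hi => by simp [hi.1, hi.2, hφ]) (by simp) (by simp)]
  simp [hjk, hjk.symm]

end Monomials

theorem integral_sq_sum_comp_eval_pi {Ω ι : Type*} [MeasurableSpace Ω] [Fintype ι]
    (μ : Measure Ω) [IsProbabilityMeasure μ] {X : Ω → ℝ} (hX : MemLp X 2 μ) :
    ∫ ω, (∑ i, X (ω i)) ^ 2 ∂Measure.pi (fun _ : ι => μ)
      = Fintype.card ι * ∫ x, X x ^ 2 ∂μ
        + Fintype.card ι * (Fintype.card ι - 1) * (∫ x, X x ∂μ) ^ 2 := by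
  classical
  have hmem : ∀ i, MemLp (fun ω : ι → Ω => X (ω i)) 2 (Measure.pi fun _ => μ) := fun i =>
    hX.comp_measurePreserving (measurePreserving_eval _ i)
  have hpair : ∀ i j : ι, ∫ ω, X (ω i) * X (ω j) ∂Measure.pi (fun _ : ι => μ)
      = (∫ x, X x ∂μ) ^ 2 + if i = j then ∫ x, X x ^ 2 ∂μ - (∫ x, X x ∂μ) ^ 2 else 0 := by
    intro i j
    split_ifs with hij
    · subst hij
      simp_rw [← sq]
      exact (integral_comp_eval (μ := fun _ : ι => μ) (i := i) (f := fun x => X x ^ 2)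
        (hX.aestronglyMeasurable.pow 2)).trans (by ring)
    · rw [((iIndepFun_pi fun _ => hX.aemeasurable).indepFun hij).integral_fun_mul_eq_mul_integral
        (hmem i).aestronglyMeasurable (hmem j).aestronglyMeasurable,
        integral_comp_eval (μ := fun _ : ι => μ) (i := i) hX.aestronglyMeasurable,
        integral_comp_eval (μ := fun _ : ι => μ) (i := j) hX.aestronglyMeasurable]
      ring
  have hsq : ∀ ω : ι → Ω, (∑ i, X (ω i)) ^ 2 = ∑ i, ∑ j, X (ω i) * X (ω j) := fun ω => by
    rw [sq, sum_mul_sum]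
  simp_rw [hsq]
  have hint : ∀ i j : ι, Integrable (fun ω : ι → Ω => X (ω i) * X (ω j))
      (Measure.pi fun _ : ι => μ) := fun i j => (hmem i).integrable_mul (hmem j)
  rw [integral_finsetSum _ fun i _ => integrable_finsetSum _ fun j _ => hint i j]
  simp_rw [integral_finsetSum _ fun j _ => hint _ j, hpair]
  simp only [sum_add_distrib, sum_const, card_univ, nsmul_eq_mul, sum_ite_eq, Finset.mem_univ,
    if_true]
  ring

variable {d : ℕ}

theorem sphereMeasure_apply_univ :
    sphereMeasure d univ = (volume : Measure (EuclideanSpace ℝ (Fin d))).toSphere univ := by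
  rw [sphereMeasure, Measure.map_apply measurable_subtype_coe MeasurableSet.univ, preimage_univ]

theorem integral_uniformSphere (F : EuclideanSpace ℝ (Fin d) → ℝ) :
    ∫ u, F u ∂uniformSphere d
      = (∫ u, F u ∂(volume : Measure (EuclideanSpace ℝ (Fin d))).toSphere)
        / (volume : Measure (EuclideanSpace ℝ (Fin d))).toSphere.real univ := by
  rw [uniformSphere, integral_smul_measure, sphereMeasure_apply_univ, sphereMeasure,
    (MeasurableEmbedding.subtype_coe isClosed_sphere.measurableSet).integral_map,
    ENNReal.toReal_inv, smul_eq_mul, inv_mul_eq_div, measureReal_def]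

variable [NeZero d]

theorem volume_toSphere_real_univ :
    (volume : Measure (EuclideanSpace ℝ (Fin d))).toSphere.real univ
      = gaussMoment 0 ^ d / radialGaussMoment (d - 1) := by
  have h := integral_mul_exp_neg_norm_sq_of_homogeneous
    (volume : Measure (EuclideanSpace ℝ (Fin d))) 0 (F := fun _ => 1) (by simp)
  have h0 := integral_prod_pow_mul_exp_neg_norm_sq (ι := Fin d) 0
  simp only [Pi.zero_apply, pow_zero, prod_const_one, prod_const, card_univ,
    Fintype.card_fin] at h0
  rw [h0, integral_const, smul_eq_mul, mul_one, finrank_euclideanSpace_fin, add_zero] at h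
  rw [h, mul_div_cancel_right₀ _ (radialGaussMoment_pos _).ne']

theorem integrable_uniformSphere_of_continuous {F : EuclideanSpace ℝ (Fin d) → ℝ}
    (hF : Continuous F) : Integrable F (uniformSphere d) := by
  have hpos : 0 < (volume : Measure (EuclideanSpace ℝ (Fin d))).toSphere.real univ := by
    rw [volume_toSphere_real_univ]
    exact div_pos (pow_pos gaussMoment_zero_pos d) (radialGaussMoment_pos _)
  refine .smul_measure ?_ (ENNReal.inv_ne_top.2 ?_)
  · rw [sphereMeasure,
      (MeasurableEmbedding.subtype_coe isClosed_sphere.measurableSet).integrable_map_iff]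
    exact (hF.comp continuous_subtype_val).integrable_of_hasCompactSupport
      (isClosed_tsupport _).isCompact
  · rw [sphereMeasure_apply_univ]
    exact (ENNReal.toReal_pos_iff.1 hpos).1.ne'

theorem integral_uniformSphere_prod_pow (a : Fin d → ℕ) :
    ∫ u, ∏ i, u i ^ a i ∂uniformSphere d
      = (∏ i, gaussMoment (a i) / gaussMoment 0)
        * (radialGaussMoment (d - 1) / radialGaussMoment (d - 1 + ∑ i, a i)) := by
  have h := integral_mul_exp_neg_norm_sq_of_homogeneous
    (volume : Measure (EuclideanSpace ℝ (Fin d))) (∑ i, a i) (F := fun x => ∏ i, x i ^ a i)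
    (fun r _ x => by simp only [PiLp.smul_apply, smul_eq_mul, mul_pow, prod_mul_distrib,
      prod_pow_eq_pow_sum])
  rw [integral_prod_pow_mul_exp_neg_norm_sq, finrank_euclideanSpace_fin] at h
  rw [integral_uniformSphere, volume_toSphere_real_univ, prod_div_distrib, prod_const, card_univ,
    Fintype.card_fin, eq_div_of_mul_eq (radialGaussMoment_pos _).ne' h.symm]
  field_simp [(radialGaussMoment_pos (d - 1)).ne', gaussMoment_zero_pos.ne']

theorem radialGaussMoment_pred_add_two :
    radialGaussMoment (d - 1 + 2) = d / 2 * radialGaussMoment (d - 1) := by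
  rw [radialGaussMoment_add_two, Nat.cast_pred (Nat.pos_of_neZero d), sub_add_cancel]

theorem radialGaussMoment_pred_add_four :
    radialGaussMoment (d - 1 + 4) = (d + 2) / 2 * (d / 2) * radialGaussMoment (d - 1) := by
  rw [show d - 1 + 4 = d - 1 + 2 + 2 by rfl, radialGaussMoment_add_two,
    radialGaussMoment_pred_add_two, Nat.cast_add, Nat.cast_pred (Nat.pos_of_neZero d)]
  ring

theorem integral_uniformSphere_coord_mul_coord (j k : Fin d) :
    ∫ u, u j * u k ∂uniformSphere d = if j = k then 1 / (d : ℝ) else 0 := by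
  have hγ : gaussMoment 0 / gaussMoment 0 = 1 := div_self gaussMoment_zero_pos.ne'
  have hmono : ∀ u : EuclideanSpace ℝ (Fin d),
      u j * u k = ∏ i, u i ^ (Pi.single j 1 + Pi.single k 1 : Fin d → ℕ) i := fun u => by
    simp only [Pi.add_apply, pow_add, prod_mul_distrib, prod_pow_single, pow_one]
  have hdeg : ∑ i, (Pi.single j 1 + Pi.single k 1 : Fin d → ℕ) i = 2 := by
    simp [sum_add_distrib]
  simp_rw [hmono]
  rw [integral_uniformSphere_prod_pow, hdeg, radialGaussMoment_pred_add_two]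
  split_ifs with hjk
  · subst hjk
    rw [← Pi.single_add, prod_apply_single (φ := fun m => gaussMoment m / gaussMoment 0) hγ,
      gaussMoment_two_div_gaussMoment_zero]
    field_simp [(radialGaussMoment_pos (d - 1)).ne']
  · rw [prod_eq_zero (mem_univ j) (by simp [hjk, gaussMoment_of_odd odd_one]), zero_mul]

theorem integral_uniformSphere_coord_mul_coord_mul_sq (j l k : Fin d) :
    ∫ u, u j * u l * u k ^ 2 ∂uniformSphere d
      = (if j = l then 1 + 2 * (if j = k then 1 else 0) else 0) / ((d : ℝ) * (d + 2)) := by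
  have hγ : gaussMoment 0 / gaussMoment 0 = 1 := div_self gaussMoment_zero_pos.ne'
  set a : Fin d → ℕ := Pi.single j 1 + Pi.single l 1 + Pi.single k 2
  have hmono : ∀ u : EuclideanSpace ℝ (Fin d), u j * u l * u k ^ 2 = ∏ i, u i ^ a i := fun u => by
    simp only [a, Pi.add_apply, pow_add, prod_mul_distrib, prod_pow_single, pow_one]
  have hdeg : ∑ i, a i = 4 := by simp [a, sum_add_distrib]
  simp_rw [hmono]
  rw [integral_uniformSphere_prod_pow, hdeg, radialGaussMoment_pred_add_four]
  have hI := (radialGaussMoment_pos (d - 1)).ne'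
  have hd : (d : ℝ) ≠ 0 := Nat.cast_ne_zero.2 (NeZero.ne d)
  have hd2 : (d : ℝ) + 2 ≠ 0 := by positivity
  split_ifs with hjl hjk
  · subst hjl hjk
    rw [show a = Pi.single j 4 by simp only [a, ← Pi.single_add],
      prod_apply_single (φ := fun m => gaussMoment m / gaussMoment 0) hγ,
      gaussMoment_four_div_gaussMoment_zero]
    field_simp
    ring
  · subst hjl
    rw [show a = Pi.single j 2 + Pi.single k 2 by simp only [a, ← Pi.single_add],
      prod_apply_single_add_single (φ := fun m => gaussMoment m / gaussMoment 0) hγ hjk,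
      gaussMoment_two_div_gaussMoment_zero]
    field_simp
    ring
  · have hodd : Odd (a j) := by
      by_cases hjk : j = k
      · subst hjk
        simp only [a, Pi.add_apply, Pi.single_eq_same, Pi.single_eq_of_ne hjl]
        decide
      · simp [a, hjl, hjk]
    rw [prod_eq_zero (mem_univ j) (by simp [gaussMoment_of_odd hodd]), zero_mul, zero_div]

theorem integral_uniformSphere_inner_mul_coord (g : EuclideanSpace ℝ (Fin d)) (k : Fin d) :
    ∫ u, ⟪g, u⟫ * u k ∂uniformSphere d = g k / d := by
  have hexp : ∀ u : EuclideanSpace ℝ (Fin d), ⟪g, u⟫ * u k = ∑ j, g j * (u j * u k) := by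
    intro u
    rw [real_inner_eq_sum_mul, sum_mul]
    exact sum_congr rfl fun j _ => by ring
  simp_rw [hexp]
  rw [integral_finsetSum _ fun j _ =>
    (integrable_uniformSphere_of_continuous (by fun_prop)).const_mul (g j)]
  simp_rw [integral_const_mul, integral_uniformSphere_coord_mul_coord]
  simp [div_eq_mul_inv]

theorem integral_uniformSphere_inner_mul_coord_sq (g : EuclideanSpace ℝ (Fin d)) (k : Fin d) :
    ∫ u, (⟪g, u⟫ * u k) ^ 2 ∂uniformSphere d = (‖g‖ ^ 2 + 2 * g k ^ 2) / (d * (d + 2)) := by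
  have hexp : ∀ u : EuclideanSpace ℝ (Fin d),
      (⟪g, u⟫ * u k) ^ 2 = ∑ j, ∑ l, g j * g l * (u j * u l * u k ^ 2) := by
    intro u
    rw [real_inner_eq_sum_mul, mul_pow, sq (∑ j, _), sum_mul_sum, sum_mul]
    exact sum_congr rfl fun j _ => by
      rw [sum_mul]
      exact sum_congr rfl fun l _ => by ring
  have hint : ∀ j l, Integrable (fun u : EuclideanSpace ℝ (Fin d) =>
      g j * g l * (u j * u l * u k ^ 2)) (uniformSphere d) := fun j l =>
    (integrable_uniformSphere_of_continuous (by fun_prop)).const_mul _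
  simp_rw [hexp]
  rw [integral_finsetSum _ fun j _ => integrable_finsetSum _ fun l _ => hint j l]
  simp_rw [integral_finsetSum _ fun l _ => hint _ l, integral_const_mul,
    integral_uniformSphere_coord_mul_coord_mul_sq]
  have hrow : ∀ j, ∑ l, g j * g l
      * ((if j = l then 1 + 2 * (if j = k then 1 else 0) else 0) / ((d : ℝ) * (d + 2)))
      = (g j ^ 2 + if j = k then 2 * g k ^ 2 else 0) / ((d : ℝ) * (d + 2)) := by
    intro j
    rw [sum_eq_single j (fun l _ hl => by simp [Ne.symm hl]) (by simp), if_pos rfl]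
    split_ifs with hjk
    · subst hjk
      ring
    · ring
  simp_rw [hrow]
  rw [← sum_div, sum_add_distrib, sum_ite_eq', if_pos (Finset.mem_univ k),
    EuclideanSpace.real_norm_sq_eq]

end UniformSphere

open UniformSphere

theorem uniform_zo_estimator_sq_expectation_general
    {d q : ℕ} [NeZero d] (hq : 1 ≤ q)
    (g : EuclideanSpace ℝ (Fin d)) (k : Fin d) :
    ∫ U : Fin q → EuclideanSpace ℝ (Fin d),
        ((((d : ℝ) / (q : ℝ)) • ∑ i : Fin q, ⟪g, U i⟫ • U i) k) ^ 2
        ∂(Measure.pi fun _ : Fin q => uniformSphere d)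
      = (d : ℝ) * (‖g‖ ^ 2 + 2 * g k ^ 2) / ((q : ℝ) * ((d : ℝ) + 2))
          + (((q : ℝ) - 1) / (q : ℝ)) * g k ^ 2 := by
  set X : EuclideanSpace ℝ (Fin d) → ℝ := fun u => ⟪g, u⟫ * u k
  have hX : MemLp X 2 (uniformSphere d) :=
    (memLp_two_iff_integrable_sq (by fun_prop : Continuous X).aestronglyMeasurable).2
      (integrable_uniformSphere_of_continuous (by fun_prop))
  have hcoord : ∀ U : Fin q → EuclideanSpace ℝ (Fin d),
      (((d : ℝ) / q) • ∑ i, ⟪g, U i⟫ • U i) k = d / q * ∑ i, X (U i) := by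
    intro U
    simp [X, WithLp.ofLp_sum, Finset.sum_apply]
  simp_rw [hcoord, mul_pow]
  rw [integral_const_mul, integral_sq_sum_comp_eval_pi _ hX,
    integral_uniformSphere_inner_mul_coord_sq, integral_uniformSphere_inner_mul_coord,
    Fintype.card_fin]
  have hq0 : (q : ℝ) ≠ 0 := by positivity
  have hd0 : (d : ℝ) ≠ 0 := Nat.cast_ne_zero.2 (NeZero.ne d)
  field_simp

/-- For a differentiable `f : ℝ^d → ℝ` with gradient `g = ∇f(x)` at `x`,
`q ≥ 1`, and `u_1, …, u_q` i.i.d. uniform on the unit sphere, the expectation of the squared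
`k`-th coordinate of `(d/q) ∑_i ⟨g, u_i⟩ u_i` equals
`d(‖g‖² + 2 g_k²)/(q(d+2)) + ((q−1)/q) g_k²`. -/
theorem uniform_zo_estimator_sq_expectation
    {d q : ℕ} [NeZero d] (hq : 1 ≤ q)
    (f : EuclideanSpace ℝ (Fin d) → ℝ) (x g : EuclideanSpace ℝ (Fin d))
    (hf : Differentiable ℝ f) (hg : gradient f x = g) (k : Fin d) :
    ∫ U : Fin q → EuclideanSpace ℝ (Fin d),
        ((((d : ℝ) / (q : ℝ)) • ∑ i : Fin q, ⟪g, U i⟫ • U i) k) ^ 2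
        ∂(Measure.pi fun _ : Fin q => uniformSphere d)
      = (d : ℝ) * (‖g‖ ^ 2 + 2 * g k ^ 2) / ((q : ℝ) * ((d : ℝ) + 2))
          + (((q : ℝ) - 1) / (q : ℝ)) * g k ^ 2 :=
  uniform_zo_estimator_sq_expectation_general hq g k
end
end
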